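/- Let X be a Banach A-bimodule such that for every x'' ∈ X**, the map a'' ↦ x''a'' from A** to X** is weak-star to weak continuous. If every bounded derivation from A** into X*** is inner, then every bounded derivation from A into X* is inner; i.e., H¹(A**, X***) = 0 implies H¹(A, X*) = 0. -/

import Mathlib

set_option maxHeartbeats 1000000

open Filter Topology ContinuousLinearMap NormedSpace

namespace NormedSpace

/-- The topological dual of a seminormed space `E` (the former Mathlib `NormedSpace.Dual`). -/
def Dual (𝕜 : Type*) [NontriviallyNormedField 𝕜] (E : Type*) [SeminormedAddCommGroup E]
    [NormedSpace 𝕜 E] : Type _ :=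
  E →L[𝕜] 𝕜

variable (𝕜 : Type*) [NontriviallyNormedField 𝕜] (E : Type*) [SeminormedAddCommGroup E]
  [NormedSpace 𝕜 E]

noncomputable instance instSeminormedAddCommGroupDual : SeminormedAddCommGroup (Dual 𝕜 E) :=
  inferInstanceAs (SeminormedAddCommGroup (E →L[𝕜] 𝕜))

noncomputable instance instNormedSpaceDual : NormedSpace 𝕜 (Dual 𝕜 E) :=
  inferInstanceAs (NormedSpace 𝕜 (E →L[𝕜] 𝕜))

instance instFunLikeDual : FunLike (Dual 𝕜 E) E 𝕜 :=
  inferInstanceAs (FunLike (E →L[𝕜] 𝕜) E 𝕜)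

instance instLinearMapClassDual : LinearMapClass (Dual 𝕜 E) 𝕜 E 𝕜 :=
  inferInstanceAs (LinearMapClass (E →L[𝕜] 𝕜) 𝕜 E 𝕜)

instance instContinuousLinearMapClassDual : ContinuousLinearMapClass (Dual 𝕜 E) 𝕜 E 𝕜 :=
  inferInstanceAs (ContinuousLinearMapClass (E →L[𝕜] 𝕜) 𝕜 E 𝕜)

noncomputable instance instInhabitedDual : Inhabited (Dual 𝕜 E) :=
  ⟨0⟩

instance instCompleteSpaceDual [CompleteSpace 𝕜] : CompleteSpace (Dual 𝕜 E) :=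
  inferInstanceAs (CompleteSpace (E →L[𝕜] 𝕜))

end NormedSpace

noncomputable section ArensSetup

/-- The adjoint (transpose) of a continuous linear map between normed spaces. -/
def adjCLM {E F : Type*} [SeminormedAddCommGroup E] [NormedSpace ℝ E]
    [SeminormedAddCommGroup F] [NormedSpace ℝ F] (T : E →L[ℝ] F) :
    Dual ℝ F →L[ℝ] Dual ℝ E :=
  (ContinuousLinearMap.compL ℝ E F ℝ).flip T

@[simp] theorem adjCLM_apply {E F : Type*} [SeminormedAddCommGroup E] [NormedSpace ℝ E]
    [SeminormedAddCommGroup F] [NormedSpace ℝ F] (T : E →L[ℝ] F) (g : Dual ℝ F) (x : E) :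
    adjCLM T g x = g (T x) := rfl

/-- One-step Arens-type adjoint of a bounded bilinear map:
`ext1 β g' e = g' ∘ (β e)`. -/
def ext1 {E F G : Type*} [SeminormedAddCommGroup E] [NormedSpace ℝ E]
    [SeminormedAddCommGroup F] [NormedSpace ℝ F] [SeminormedAddCommGroup G] [NormedSpace ℝ G]
    (β : E →L[ℝ] F →L[ℝ] G) : Dual ℝ G →L[ℝ] E →L[ℝ] Dual ℝ F :=
  ((ContinuousLinearMap.compL ℝ F G ℝ).flip.comp β).flip

@[simp] theorem ext1_apply {E F G : Type*} [SeminormedAddCommGroup E] [NormedSpace ℝ E]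
    [SeminormedAddCommGroup F] [NormedSpace ℝ F] [SeminormedAddCommGroup G] [NormedSpace ℝ G]
    (β : E →L[ℝ] F →L[ℝ] G) (g' : Dual ℝ G) (e : E) (f : F) :
    ext1 β g' e f = g' (β e f) := rfl

/-- Triple adjoint: the (first) Arens extension of a bounded bilinear map to the
second duals. -/
def ext3 {E F G : Type*} [SeminormedAddCommGroup E] [NormedSpace ℝ E]
    [SeminormedAddCommGroup F] [NormedSpace ℝ F] [SeminormedAddCommGroup G] [NormedSpace ℝ G]
    (β : E →L[ℝ] F →L[ℝ] G) :
    Dual ℝ (Dual ℝ E) →L[ℝ] Dual ℝ (Dual ℝ F) →L[ℝ] Dual ℝ (Dual ℝ G) :=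
  ext1 (ext1 (ext1 β))

variable (A : Type*) [NonUnitalNormedRing A] [NormedSpace ℝ A]
  [SMulCommClass ℝ A A] [IsScalarTower ℝ A A] [CompleteSpace A]

/-- The first (left) Arens product on `A**`: `⟨a''b'', a'⟩ = ⟨a'', b''a'⟩`. -/
def fArens : Dual ℝ (Dual ℝ A) →L[ℝ] Dual ℝ (Dual ℝ A) →L[ℝ] Dual ℝ (Dual ℝ A) :=
  ext3 (ContinuousLinearMap.mul ℝ A)

/-- The second (right) Arens product on `A**`: `⟨a''∘b'', a'⟩ = ⟨b'', a'∘a''⟩`. -/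
def sArens : Dual ℝ (Dual ℝ A) →L[ℝ] Dual ℝ (Dual ℝ A) →L[ℝ] Dual ℝ (Dual ℝ A) :=
  (ext3 (ContinuousLinearMap.mul ℝ A).flip).flip

/-- `A` is Arens regular when the two Arens products on `A**` coincide. -/
def ArensRegular : Prop := fArens A = sArens A

variable {A}

/-- Weak-star to weak continuity for a map from the dual of `E` into `F`. -/
def WStarToWCont {E F : Type*} [SeminormedAddCommGroup E] [NormedSpace ℝ E]
    [SeminormedAddCommGroup F] [NormedSpace ℝ F] (f : Dual ℝ E → F) : Prop :=
  Continuous fun x : WeakDual ℝ E => toWeakSpace ℝ F (f (WeakDual.toStrongDual x))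

variable (A)

/-- The second adjoint `T'' : A** → A**` of `T : A → A`. -/
def secondAdj (T : A →L[ℝ] A) : Dual ℝ (Dual ℝ A) →L[ℝ] Dual ℝ (Dual ℝ A) :=
  adjCLM (adjCLM T)

/-- Left action of `A` on `A*`: `⟨a·a', b⟩ = ⟨a', ba⟩`. -/
def dualLeft : A →L[ℝ] Dual ℝ A →L[ℝ] Dual ℝ A :=
  (ext1 (ContinuousLinearMap.mul ℝ A).flip).flip

/-- Right action of `A` on `A*`: `⟨a'·a, b⟩ = ⟨a', ab⟩`. -/
def dualRight : Dual ℝ A →L[ℝ] A →L[ℝ] Dual ℝ A :=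
  ext1 (ContinuousLinearMap.mul ℝ A)

/-- Left action of `A**` (first Arens product) on `A***`. -/
def dualLeft2 : Dual ℝ (Dual ℝ A) →L[ℝ] Dual ℝ (Dual ℝ (Dual ℝ A)) →L[ℝ]
    Dual ℝ (Dual ℝ (Dual ℝ A)) :=
  (ext1 (fArens A).flip).flip

/-- Right action of `A**` (first Arens product) on `A***`. -/
def dualRight2 : Dual ℝ (Dual ℝ (Dual ℝ A)) →L[ℝ] Dual ℝ (Dual ℝ A) →L[ℝ]
    Dual ℝ (Dual ℝ (Dual ℝ A)) :=
  ext1 (fArens A)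

end ArensSetup

section BimoduleSetup

set_option maxHeartbeats 1000000

open Filter Topology ContinuousLinearMap NormedSpace

/-- A Banach `A`-bimodule: bounded bilinear left and right actions satisfying the
usual compatibility axioms. -/
structure BanachBimodule (A X : Type*) [NonUnitalNormedRing A] [NormedSpace ℝ A]
    [SMulCommClass ℝ A A] [IsScalarTower ℝ A A]
    [NormedAddCommGroup X] [NormedSpace ℝ X] [CompleteSpace X] where
  l : A →L[ℝ] X →L[ℝ] X
  r : X →L[ℝ] A →L[ℝ] X
  l_mul : ∀ a b x, l (a * b) x = l a (l b x)
  r_mul : ∀ x a b, r (r x a) b = r x (a * b)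
  l_r : ∀ a x b, l a (r x b) = r (l a x) b

variable {A X : Type*} [NonUnitalNormedRing A] [NormedSpace ℝ A]
  [SMulCommClass ℝ A A] [IsScalarTower ℝ A A] [CompleteSpace A]
  [NormedAddCommGroup X] [NormedSpace ℝ X] [CompleteSpace X]

/-- Left action of `A` on `X*`: `⟨a·f, x⟩ = ⟨f, x·a⟩`. -/
noncomputable def modDualLeft (M : BanachBimodule A X) : A →L[ℝ] Dual ℝ X →L[ℝ] Dual ℝ X :=
  (ext1 M.r.flip).flip

/-- Right action of `A` on `X*`: `⟨f·a, x⟩ = ⟨f, a·x⟩`. -/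
noncomputable def modDualRight (M : BanachBimodule A X) : Dual ℝ X →L[ℝ] A →L[ℝ] Dual ℝ X :=
  ext1 M.l

/-- Left action of `A**` on `X**` (first Arens extension). -/
noncomputable def modL2 (M : BanachBimodule A X) :
    Dual ℝ (Dual ℝ A) →L[ℝ] Dual ℝ (Dual ℝ X) →L[ℝ] Dual ℝ (Dual ℝ X) :=
  ext3 M.l

/-- Right action of `A**` on `X**` (first Arens extension); `modR2 M x'' a'' = x''a''`. -/
noncomputable def modR2 (M : BanachBimodule A X) :
    Dual ℝ (Dual ℝ X) →L[ℝ] Dual ℝ (Dual ℝ A) →L[ℝ] Dual ℝ (Dual ℝ X) :=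
  ext3 M.r

/-- Left action of `A**` on `X***`: `⟨a''·x''', x''⟩ = ⟨x''', x''a''⟩`. -/
noncomputable def modL3 (M : BanachBimodule A X) :
    Dual ℝ (Dual ℝ A) →L[ℝ] Dual ℝ (Dual ℝ (Dual ℝ X)) →L[ℝ] Dual ℝ (Dual ℝ (Dual ℝ X)) :=
  (ext1 (modR2 M).flip).flip

/-- Right action of `A**` on `X***`: `⟨x'''·a'', x''⟩ = ⟨x''', a''x''⟩`. -/
noncomputable def modR3 (M : BanachBimodule A X) :
    Dual ℝ (Dual ℝ (Dual ℝ X)) →L[ℝ] Dual ℝ (Dual ℝ A) →L[ℝ] Dual ℝ (Dual ℝ (Dual ℝ X)) :=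
  ext1 (modL2 M)

end BimoduleSetup

section DerivationSetup

variable {B Y : Type*} [SeminormedAddCommGroup B] [NormedSpace ℝ B]
  [SeminormedAddCommGroup Y] [NormedSpace ℝ Y]

/-- `D` is a derivation with respect to the multiplication `m` and the module
actions `l`, `r`. -/
def IsDeriv (m : B →L[ℝ] B →L[ℝ] B) (l : B →L[ℝ] Y →L[ℝ] Y)
    (r : Y →L[ℝ] B →L[ℝ] Y) (D : B →L[ℝ] Y) : Prop :=
  ∀ a b, D (m a b) = l a (D b) + r (D a) b

/-- `D` is an inner derivation: `D a = a·y − y·a` for some fixed `y`. -/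
def IsInner (l : B →L[ℝ] Y →L[ℝ] Y) (r : Y →L[ℝ] B →L[ℝ] Y) (D : B →L[ℝ] Y) : Prop :=
  ∃ y, ∀ a, D a = l a y - r y a

/-- `D` is a `T-S`-derivation: `D(ab) = T(a)·D(b) + D(a)·S(b)`. -/
def IsTSDeriv (m : B →L[ℝ] B →L[ℝ] B) (l : B →L[ℝ] Y →L[ℝ] Y)
    (r : Y →L[ℝ] B →L[ℝ] Y) (T S : B →L[ℝ] B) (D : B →L[ℝ] Y) : Prop :=
  ∀ a b, D (m a b) = l (T a) (D b) + r (D a) (S b)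

/-- `D` is an inner `T-S`-derivation: `D a = T(a)·y − y·S(a)` for some fixed `y`. -/
def IsTSInner (l : B →L[ℝ] Y →L[ℝ] Y) (r : Y →L[ℝ] B →L[ℝ] Y)
    (T S : B →L[ℝ] B) (D : B →L[ℝ] Y) : Prop :=
  ∃ y, ∀ a, D a = l (T a) y - r y (S a)

end DerivationSetup

/-!
The second adjoint `D''` of a derivation `D : A → X*` satisfies
`⟨D''(a''b''), x''⟩ = ⟨D''(b''), x''a''⟩ + ⟨D''(a''), b''x''⟩` for `a'', b'' ∈ ι(A)`. All three
terms are weak-star continuous in `b''` when `a'' ∈ ι(A)`, and in `a''` for every `b''`; for the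
term `⟨D''(b''), x''a''⟩` this is exactly the weak-star to weak continuity of `a'' ↦ x''a''`.
As `ι(A)` is weak-star dense in `A**` (Goldstine, via Helly's lemma), the identity extends first
in `b''` and then in `a''`, so `D''` is a derivation on `A**`. If `D'' = ad y` with `y ∈ X***`,
then `D = ad (y ∘ ι)`, with `ι : X → X**` the canonical embedding.
-/

section Bidual

variable {𝕜 E : Type*} [NontriviallyNormedField 𝕜] [SeminormedAddCommGroup E] [NormedSpace 𝕜 E]

theorem exists_eq_bidual_on_finiteDimensional (V : Submodule 𝕜 (StrongDual 𝕜 E))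
    [FiniteDimensional 𝕜 V] (b : StrongDual 𝕜 (StrongDual 𝕜 E)) :
    ∃ a : E, ∀ φ ∈ V, φ a = b φ := by
  -- `V` is finite-dimensional and embeds into `E*`, so evaluation `E → V*` is onto.
  have hB : Function.Injective (topDualPairing 𝕜 E ∘ₗ V.subtype) :=
    ContinuousLinearMap.coe_injective.comp Subtype.val_injective
  obtain ⟨a, ha⟩ := (LinearMap.flip_surjective_iff₁ (K := 𝕜) (V₁ := V)).mpr hB
    ((b : StrongDual 𝕜 E →ₗ[𝕜] 𝕜).domRestrict V)
  exact ⟨a, fun φ hφ => LinearMap.congr_fun ha ⟨φ, hφ⟩⟩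

variable (𝕜 E) in
theorem denseRange_toWeakDual_inclusionInDoubleDual :
    DenseRange fun a : E => StrongDual.toWeakDual (inclusionInDoubleDual 𝕜 E a) := by
  intro b
  choose a ha using fun s : Finset (StrongDual 𝕜 E) =>
    exists_eq_bidual_on_finiteDimensional (Submodule.span 𝕜 s) (WeakDual.toStrongDual b)
  refine mem_closure_of_tendsto (b := atTop) ?_ (.of_forall fun s => Set.mem_range_self (a s))
  refine tendsto_iff_forall_eval_tendsto_topDualPairing.mpr fun φ => tendsto_const_nhds.congr' ?_
  filter_upwards [eventually_ge_atTop {φ}] with s hs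
  exact (ha s φ (Submodule.subset_span (hs (Finset.mem_singleton_self φ)))).symm

theorem eq_of_continuous_of_eq_on_inclusionInDoubleDual {Y : Type*} [TopologicalSpace Y]
    [T2Space Y] {f g : StrongDual 𝕜 (StrongDual 𝕜 E) → Y}
    (hf : Continuous fun w : WeakDual 𝕜 (StrongDual 𝕜 E) => f (WeakDual.toStrongDual w))
    (hg : Continuous fun w : WeakDual 𝕜 (StrongDual 𝕜 E) => g (WeakDual.toStrongDual w))
    (h : ∀ a, f (inclusionInDoubleDual 𝕜 E a) = g (inclusionInDoubleDual 𝕜 E a))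
    (b : StrongDual 𝕜 (StrongDual 𝕜 E)) : f b = g b :=
  congrFun (hf.ext_on (denseRange_toWeakDual_inclusionInDoubleDual 𝕜 E) hg
    (Set.forall_mem_range.mpr h)) (StrongDual.toWeakDual b)

end Bidual

theorem WStarToWCont.continuous_dual_comp {E F : Type*} [SeminormedAddCommGroup E]
    [NormedSpace ℝ E] [SeminormedAddCommGroup F] [NormedSpace ℝ F] {f : Dual ℝ E → F}
    (hf : WStarToWCont f) (ψ : Dual ℝ F) :
    Continuous fun w : WeakDual ℝ E => ψ (f (WeakDual.toStrongDual w)) :=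
  have hψ : Continuous fun z : WeakSpace ℝ F => ψ ((toWeakSpace ℝ F).symm z) :=
    WeakBilin.eval_continuous _ ψ
  hψ.comp hf

section SecondAdjointDerivation

variable {A X : Type*} [NonUnitalNormedRing A] [NormedSpace ℝ A]
  [SMulCommClass ℝ A A] [IsScalarTower ℝ A A]
  [NormedAddCommGroup X] [NormedSpace ℝ X] [CompleteSpace X]
  (M : BanachBimodule A X) {D : A →L[ℝ] Dual ℝ X}

theorem adjCLM_adjCLM_fArens_inclusionInDoubleDual
    (hD : IsDeriv (ContinuousLinearMap.mul ℝ A) (modDualLeft M) (modDualRight M) D) (a b : A) :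
    adjCLM (adjCLM D) (fArens A (inclusionInDoubleDual ℝ A a) (inclusionInDoubleDual ℝ A b)) =
      modL3 M (inclusionInDoubleDual ℝ A a) (adjCLM (adjCLM D) (inclusionInDoubleDual ℝ A b)) +
        modR3 M (adjCLM (adjCLM D) (inclusionInDoubleDual ℝ A a)) (inclusionInDoubleDual ℝ A b) :=
  ContinuousLinearMap.ext fun x'' => (congrArg x'' (hD a b)).trans (map_add x'' _ _)

theorem adjCLM_adjCLM_fArens_inclusionInDoubleDual_left
    (hD : IsDeriv (ContinuousLinearMap.mul ℝ A) (modDualLeft M) (modDualRight M) D) (a : A)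
    (b'' : Dual ℝ (Dual ℝ A)) :
    adjCLM (adjCLM D) (fArens A (inclusionInDoubleDual ℝ A a) b'') =
      modL3 M (inclusionInDoubleDual ℝ A a) (adjCLM (adjCLM D) b'') +
        modR3 M (adjCLM (adjCLM D) (inclusionInDoubleDual ℝ A a)) b'' := by
  refine ContinuousLinearMap.ext fun x'' => ?_
  refine eq_of_continuous_of_eq_on_inclusionInDoubleDual
    (f := fun b'' => adjCLM (adjCLM D) (fArens A (inclusionInDoubleDual ℝ A a) b'') x'')
    (g := fun b'' => (modL3 M (inclusionInDoubleDual ℝ A a) (adjCLM (adjCLM D) b'') +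
        modR3 M (adjCLM (adjCLM D) (inclusionInDoubleDual ℝ A a)) b'') x'')
    (WeakDual.eval_continuous (ext1 (ContinuousLinearMap.mul ℝ A) (adjCLM D x'') a))
    ((WeakDual.eval_continuous (adjCLM D (modR2 M x'' (inclusionInDoubleDual ℝ A a)))).add
      (WeakDual.eval_continuous (ext1 (ext1 M.l) x'' (D a))))
    (fun b => ?_) b''
  exact congrArg (· x'') (adjCLM_adjCLM_fArens_inclusionInDoubleDual M hD a b)

theorem isDeriv_adjCLM_adjCLM
    (hw : ∀ x'' : Dual ℝ (Dual ℝ X), WStarToWCont (fun a'' => modR2 M x'' a''))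
    (hD : IsDeriv (ContinuousLinearMap.mul ℝ A) (modDualLeft M) (modDualRight M) D) :
    IsDeriv (fArens A) (modL3 M) (modR3 M) (adjCLM (adjCLM D)) := by
  intro a'' b''
  refine ContinuousLinearMap.ext fun x'' => ?_
  refine eq_of_continuous_of_eq_on_inclusionInDoubleDual
    (f := fun a'' => adjCLM (adjCLM D) (fArens A a'' b'') x'')
    (g := fun a'' => (modL3 M a'' (adjCLM (adjCLM D) b'') +
        modR3 M (adjCLM (adjCLM D) a'') b'') x'')
    (WeakDual.eval_continuous (ext1 (ext1 (ContinuousLinearMap.mul ℝ A)) b'' (adjCLM D x'')))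
    (((hw x'').continuous_dual_comp (adjCLM (adjCLM D) b'')).add
      (WeakDual.eval_continuous (adjCLM D (modL2 M b'' x''))))
    (fun a => ?_) a''
  exact congrArg (· x'') (adjCLM_adjCLM_fArens_inclusionInDoubleDual_left M hD a b'')

theorem isInner_of_isInner_adjCLM_adjCLM
    (h : IsInner (modL3 M) (modR3 M) (adjCLM (adjCLM D))) :
    IsInner (modDualLeft M) (modDualRight M) D := by
  obtain ⟨y, hy⟩ := h
  exact ⟨adjCLM (inclusionInDoubleDual ℝ X) y, fun a => ContinuousLinearMap.ext fun x =>
    congrArg (· (inclusionInDoubleDual ℝ X x)) (hy (inclusionInDoubleDual ℝ A a))⟩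

end SecondAdjointDerivation

section Statements
set_option maxHeartbeats 1000000
open Filter Topology ContinuousLinearMap NormedSpace

variable {A : Type*} [NonUnitalNormedRing A] [NormedSpace ℝ A]
  [SMulCommClass ℝ A A] [IsScalarTower ℝ A A] [CompleteSpace A]

variable {X : Type*} [NormedAddCommGroup X] [NormedSpace ℝ X] [CompleteSpace X]

/-- If `a'' ↦ x''a''` is weak-star to weak continuous for all `x'' ∈ X**`, then
`H¹(A**, X***) = 0` implies `H¹(A, X*) = 0`. -/
theorem cohomology_vanishing_descends (M : BanachBimodule A X)
    (hw : ∀ x'' : Dual ℝ (Dual ℝ X), WStarToWCont (fun a'' => modR2 M x'' a''))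
    (hcoh : ∀ G : Dual ℝ (Dual ℝ A) →L[ℝ] Dual ℝ (Dual ℝ (Dual ℝ X)),
      IsDeriv (fArens A) (modL3 M) (modR3 M) G → IsInner (modL3 M) (modR3 M) G) :
    ∀ D : A →L[ℝ] Dual ℝ X,
      IsDeriv (ContinuousLinearMap.mul ℝ A) (modDualLeft M) (modDualRight M) D →
      IsInner (modDualLeft M) (modDualRight M) D :=
  fun _ hD => isInner_of_isInner_adjCLM_adjCLM M (hcoh _ (isDeriv_adjCLM_adjCLM M hw hD))

end Statements
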